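/- Let β, β' ≤ 1. If there exist unbounded sets and a bi-Lipschitz bijection F between Γ_β = {(x, x^β) : x ≥ 1} ∪ {(x,0) : x ≥ 1} and Γ_{β'} = {(x, x^{β'}) : x ≥ 1} ∪ {(x,0) : x ≥ 1} mapping each of the two component curves onto the corresponding one, then β = β'. -/

import Mathlib

/-- The curve {(x, x^β) : x ≥ 1} ⊂ ℝ². -/
def powCurve (β : ℝ) : Set (EuclideanSpace ℝ (Fin 2)) := {p | 1 ≤ p 0 ∧ p 1 = (p 0) ^ β}

/-- The horizontal ray {(x, 0) : x ≥ 1} ⊂ ℝ². -/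
def horizRay : Set (EuclideanSpace ℝ (Fin 2)) := {p | 1 ≤ p 0 ∧ p 1 = 0}

/-!
Two quantities are comparable up to the factor `M` under `F`: the distance from a point of the
curve to the ray, which is `x ^ β` at `(x, x ^ β)`, and the distance to the base point `(1, 0)`
of the ray, which grows like `x` as long as `β ≤ 1`. Writing `F (x, x ^ β) = (y, y ^ β')`,
this gives `y ≍ x` and `y ^ β' ≍ x ^ β`, hence `x ^ β' ≍ x ^ β`, which forces `β = β'`.
-/

open Metric Filter Asymptotics Set

section BiLipschitz

variable {X Y : Type*} [PseudoMetricSpace X] [PseudoMetricSpace Y] {F : X → Y} {S R : Set X}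
  {M : ℝ} {p : X}

theorem infDist_image_le_mul (hM : 0 < M) (hRS : R ⊆ S) (hp : p ∈ S)
    (hF : ∀ x ∈ S, ∀ y ∈ S, dist (F x) (F y) ≤ M * dist x y) :
    infDist (F p) (F '' R) ≤ M * infDist p R := by
  rcases R.eq_empty_or_nonempty with rfl | hR
  · simp
  rw [← div_le_iff₀' hM, le_infDist hR]
  intro r hr
  rw [div_le_iff₀' hM]
  exact (infDist_le_dist_of_mem (mem_image_of_mem F hr)).trans (hF p hp r (hRS hr))

theorem infDist_le_mul_infDist_image (hM : 0 < M) (hRS : R ⊆ S) (hp : p ∈ S)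
    (hF : ∀ x ∈ S, ∀ y ∈ S, dist x y ≤ M * dist (F x) (F y)) :
    infDist p R ≤ M * infDist (F p) (F '' R) := by
  rcases R.eq_empty_or_nonempty with rfl | hR
  · simp
  rw [← div_le_iff₀' hM, le_infDist (hR.image F)]
  rintro _ ⟨r, hr, rfl⟩
  rw [div_le_iff₀' hM]
  exact (infDist_le_dist_of_mem hr).trans (hF p hp r (hRS hr))

end BiLipschitz

theorem isTheta_id_of_affine_bounds {u : ℝ → ℝ} {a b c₁ c₂ : ℝ} (ha : 0 < a)
    (hlow : ∀ᶠ x in atTop, a * x - c₁ ≤ u x)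
    (hup : ∀ᶠ x in atTop, u x ≤ b * x + c₂) :
    u =Θ[atTop] id := by
  have hbounds : ∀ᶠ x in atTop, 0 ≤ x ∧ a * x / 2 ≤ u x ∧ u x ≤ (|b| + |c₂|) * x := by
    filter_upwards [hlow, hup, eventually_ge_atTop 1, eventually_ge_atTop (2 * |c₁| / a)]
      with x hl hu h1 hc
    rw [div_le_iff₀ ha] at hc
    refine ⟨by linarith, ?_, ?_⟩ <;>
      nlinarith [le_abs_self b, le_abs_self c₁, le_abs_self c₂, abs_nonneg c₂]
  refine ⟨IsBigO.of_bound (|b| + |c₂|) ?_, IsBigO.of_bound (2 / a) ?_⟩ <;>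
    filter_upwards [hbounds] with x ⟨h0, hl, hu⟩ <;>
    rw [Real.norm_eq_abs, Real.norm_eq_abs, id, abs_of_nonneg h0,
      abs_of_nonneg (by nlinarith)]
  · exact hu
  · rw [div_mul_eq_mul_div, le_div_iff₀ ha]
    linarith

theorem eq_of_isTheta_rpow_atTop {a b : ℝ}
    (h : (fun x : ℝ => x ^ a) =Θ[atTop] fun x => x ^ b) : a = b := by
  wlog hab : a < b generalizing a b
  · rcases (not_lt.1 hab).eq_or_lt with hba | hba
    · exact hba.symm
    · exact (this h.symm hba).symm
  have hsmall : (fun x : ℝ => x ^ a) =o[atTop] fun x => x ^ b := by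
    refine (isLittleO_iff_tendsto' ?_).2 ?_
    · filter_upwards [eventually_gt_atTop 0] with x hx h0
      exact absurd h0 (Real.rpow_pos_of_pos hx b).ne'
    · refine (tendsto_rpow_neg_atTop (sub_pos.2 hab)).congr' ?_
      filter_upwards [eventually_gt_atTop 0] with x hx
      rw [neg_sub, Real.rpow_sub hx]
  refine (hsmall.not_isBigO (Eventually.frequently ?_) h.2).elim
  filter_upwards [eventually_gt_atTop 0] with x hx
  exact (Real.rpow_pos_of_pos hx a).ne'

local notation "ℝ²" => EuclideanSpace ℝ (Fin 2)

theorem EuclideanSpace.abs_sub_apply_le_dist {ι : Type*} [Fintype ι] (p q : EuclideanSpace ℝ ι)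
    (i : ι) : |p i - q i| ≤ dist p q :=
  dist_eq_norm p q ▸ PiLp.norm_apply_le (p - q) i

theorem dist_le_abs_add_abs (p q : ℝ²) : dist p q ≤ |p 0 - q 0| + |p 1 - q 1| := by
  rw [EuclideanSpace.dist_eq, Fin.sum_univ_two, Real.dist_eq, Real.dist_eq,
    Real.sqrt_le_left (by positivity)]
  nlinarith [abs_nonneg (p 0 - q 0), abs_nonneg (p 1 - q 1), sq_abs (p 0 - q 0),
    sq_abs (p 1 - q 1)]

theorem infDist_horizRay {p : ℝ²} (hp₀ : 1 ≤ p 0) (hp₁ : 0 ≤ p 1) :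
    infDist p horizRay = p 1 := by
  apply le_antisymm
  · calc infDist p horizRay ≤ dist p !₂[p 0, 0] :=
          infDist_le_dist_of_mem ⟨by simpa using hp₀, by simp⟩
      _ ≤ p 1 := by simpa [abs_of_nonneg hp₁] using dist_le_abs_add_abs p !₂[p 0, 0]
  · refine (le_infDist ⟨!₂[1, 0], by simp [horizRay]⟩).2 fun r hr => ?_
    simpa [hr.2, abs_of_nonneg hp₁] using EuclideanSpace.abs_sub_apply_le_dist p r 1

theorem infDist_horizRay_of_mem_powCurve {β : ℝ} {p : ℝ²} (hp : p ∈ powCurve β) :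
    infDist p horizRay = p 0 ^ β := by
  rw [infDist_horizRay hp.1 (hp.2 ▸ Real.rpow_nonneg (by linarith [hp.1]) β), hp.2]

theorem dist_le_of_mem_powCurve_of_mem_horizRay {β : ℝ} (hβ : β ≤ 1) {p a : ℝ²}
    (hp : p ∈ powCurve β) (ha : a ∈ horizRay) : dist p a ≤ 2 * p 0 + a 0 := by
  have hp₁ : p 0 ^ β ≤ p 0 := by
    simpa using Real.rpow_le_rpow_of_exponent_le hp.1 hβ
  have hp₁' : 0 ≤ p 0 ^ β := Real.rpow_nonneg (by linarith [hp.1]) β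
  calc dist p a ≤ |p 0 - a 0| + |p 1 - a 1| := dist_le_abs_add_abs p a
    _ ≤ 2 * p 0 + a 0 := by
      have : |p 0 - a 0| ≤ p 0 + a 0 :=
        abs_sub_le_iff.2 ⟨by linarith [ha.1], by linarith [hp.1]⟩
      rw [hp.2, ha.2, sub_zero, abs_of_nonneg hp₁']
      linarith

section BiLipschitzMap

variable {β β' M : ℝ} {F : ℝ² → ℝ²}

theorem isTheta_rpow_of_bilipschitz (hM : 0 < M)
    (hlip : ∀ x ∈ powCurve β ∪ horizRay, ∀ y ∈ powCurve β ∪ horizRay,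
      dist (F x) (F y) ≤ M * dist x y)
    (hanti : ∀ x ∈ powCurve β ∪ horizRay, ∀ y ∈ powCurve β ∪ horizRay,
      dist x y ≤ M * dist (F x) (F y))
    (hcurve : MapsTo F (powCurve β) (powCurve β')) (hray : F '' horizRay = horizRay) :
    (fun x => F !₂[x, x ^ β] 0 ^ β') =Θ[atTop] fun x => x ^ β := by
  have hheight : ∀ p ∈ powCurve β,
      F p 0 ^ β' ≤ M * p 0 ^ β ∧ p 0 ^ β ≤ M * F p 0 ^ β' := by
    intro p hp
    have hup := infDist_image_le_mul (R := horizRay) hM subset_union_right (Or.inl hp) hlip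
    have hlow :=
      infDist_le_mul_infDist_image (R := horizRay) hM subset_union_right (Or.inl hp) hanti
    rw [hray, infDist_horizRay_of_mem_powCurve hp,
      infDist_horizRay_of_mem_powCurve (hcurve hp)] at hup hlow
    exact ⟨hup, hlow⟩
  refine ⟨IsBigO.of_bound M ?_, IsBigO.of_bound M ?_⟩ <;>
    filter_upwards [eventually_ge_atTop 1] with x hx <;>
    have hp : !₂[x, x ^ β] ∈ powCurve β := ⟨by simpa using hx, by simp⟩ <;>
    have hFp := (hcurve hp).1 <;>
    rw [Real.norm_eq_abs, Real.norm_eq_abs, abs_of_nonneg (by positivity),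
      abs_of_nonneg (by positivity)]
  · simpa using (hheight _ hp).1
  · simpa using (hheight _ hp).2

theorem isTheta_id_of_bilipschitz (hβ : β ≤ 1) (hβ' : β' ≤ 1) (hM : 0 < M)
    (hlip : ∀ x ∈ powCurve β ∪ horizRay, ∀ y ∈ powCurve β ∪ horizRay,
      dist (F x) (F y) ≤ M * dist x y)
    (hanti : ∀ x ∈ powCurve β ∪ horizRay, ∀ y ∈ powCurve β ∪ horizRay,
      dist x y ≤ M * dist (F x) (F y))
    (hcurve : MapsTo F (powCurve β) (powCurve β')) (hray : MapsTo F horizRay horizRay) :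
    (fun x => F !₂[x, x ^ β] 0) =Θ[atTop] id := by
  set o : ℝ² := !₂[1, 0]
  have ho : o ∈ horizRay := by simp [o, horizRay]
  refine isTheta_id_of_affine_bounds (a := 1 / (2 * M)) (b := 2 * M)
    (c₁ := (1 + M * F o 0) / (2 * M)) (c₂ := M + F o 0) (by positivity) ?_ ?_ <;>
    filter_upwards [eventually_ge_atTop 1] with x hx <;>
    have hp : !₂[x, x ^ β] ∈ powCurve β := ⟨by simpa using hx, by simp⟩
  · have hdist : x - 1 ≤ dist !₂[x, x ^ β] o := by
      simpa [o] using
        (le_abs_self _).trans (EuclideanSpace.abs_sub_apply_le_dist !₂[x, x ^ β] o 0)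
    have hanti' := hanti _ (Or.inl hp) o (Or.inr ho)
    have hFdist := dist_le_of_mem_powCurve_of_mem_horizRay hβ' (hcurve hp) (hray ho)
    rw [div_mul_eq_mul_div, one_mul, ← sub_div, div_le_iff₀ (by positivity)]
    nlinarith
  · have hdist : dist !₂[x, x ^ β] o ≤ 2 * x + 1 := by
      simpa [o] using dist_le_of_mem_powCurve_of_mem_horizRay hβ hp ho
    have hlip' := hlip _ (Or.inl hp) o (Or.inr ho)
    have hFdist : F !₂[x, x ^ β] 0 - F o 0 ≤ dist (F !₂[x, x ^ β]) (F o) :=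
      (le_abs_self _).trans (EuclideanSpace.abs_sub_apply_le_dist _ _ 0)
    nlinarith [mul_le_mul_of_nonneg_left hdist hM.le]

end BiLipschitzMap

theorem stmt19_general (β β' : ℝ) (hβ : β ≤ 1) (hβ' : β' ≤ 1)
    (F : EuclideanSpace ℝ (Fin 2) → EuclideanSpace ℝ (Fin 2)) (M : ℝ) (hM : 1 ≤ M)
    (him₁ : F '' powCurve β = powCurve β') (him₂ : F '' horizRay = horizRay)
    (hbl : ∀ x ∈ powCurve β ∪ horizRay, ∀ y ∈ powCurve β ∪ horizRay,
      (1 / M) * ‖x - y‖ ≤ ‖F x - F y‖ ∧ ‖F x - F y‖ ≤ M * ‖x - y‖) :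
    β = β' := by
  have hM₀ : 0 < M := by linarith
  have hlip : ∀ x ∈ powCurve β ∪ horizRay, ∀ y ∈ powCurve β ∪ horizRay,
      dist (F x) (F y) ≤ M * dist x y := fun x hx y hy => by
    simpa only [dist_eq_norm] using (hbl x hx y hy).2
  have hanti : ∀ x ∈ powCurve β ∪ horizRay, ∀ y ∈ powCurve β ∪ horizRay,
      dist x y ≤ M * dist (F x) (F y) := fun x hx y hy => by
    rw [dist_eq_norm, dist_eq_norm, ← div_le_iff₀' hM₀, div_eq_inv_mul, ← one_div]
    exact (hbl x hx y hy).1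
  have hcurve : MapsTo F (powCurve β) (powCurve β') := him₁ ▸ mapsTo_image F _
  have hray : MapsTo F horizRay horizRay := fun p hp => him₂ ▸ mem_image_of_mem F hp
  have hhoriz := isTheta_id_of_bilipschitz hβ hβ' hM₀ hlip hanti hcurve hray
  have hvert := isTheta_rpow_of_bilipschitz hM₀ hlip hanti hcurve him₂
  have hnonneg : 0 ≤ᶠ[atTop] fun x => F !₂[x, x ^ β] 0 := by
    filter_upwards [eventually_ge_atTop 1] with x hx
    exact zero_le_one.trans (hcurve ⟨by simpa using hx, by simp⟩).1
  exact eq_of_isTheta_rpow_atTop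
    (hvert.symm.trans (hhoriz.rpow hnonneg (eventually_ge_atTop 0)))

/-- If β, β' ≤ 1 and there is a bi-Lipschitz bijection between
Γ_β = {(x,x^β) : x ≥ 1} ∪ {(x,0) : x ≥ 1} and Γ_{β'} mapping each component curve onto the
corresponding one, then β = β'. -/
theorem stmt19 (β β' : ℝ) (hβ : β ≤ 1) (hβ' : β' ≤ 1)
    (F : EuclideanSpace ℝ (Fin 2) → EuclideanSpace ℝ (Fin 2)) (M : ℝ) (hM : 1 ≤ M)
    (hbij : Set.BijOn F (powCurve β ∪ horizRay) (powCurve β' ∪ horizRay))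
    (him₁ : F '' powCurve β = powCurve β') (him₂ : F '' horizRay = horizRay)
    (hbl : ∀ x ∈ powCurve β ∪ horizRay, ∀ y ∈ powCurve β ∪ horizRay,
      (1 / M) * ‖x - y‖ ≤ ‖F x - F y‖ ∧ ‖F x - F y‖ ≤ M * ‖x - y‖) :
    β = β' :=
  stmt19_general β β' hβ hβ' F M hM him₁ him₂ hbl
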